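/- arXiv:1509.00126 — 3 statements merged into one kernel-verified Lean document; each statement's English description precedes it below -/
import Mathlib

section
/- Theorem 2(b): If (1−δ)·(f_α+f_β)/2 > c > (1−δ)·f_β, then the unique strongly efficient network is the graph whose edges are exactly the pairs {i,j} with at least one endpoint in A: every two type-α agents are linked, every type-α agent is linked with every type-β agent, and no two type-β agents are linked. -/
open Finset

noncomputable section

open scoped Classical

variable {I : Type*}

/-- Benefit function of the two-type connections model: a connection to a
type-α agent (a member of `A`) yields `fα`, a connection to a type-β agent
yields `fβ` (before spatial discounting). -/
def fTheta [DecidableEq I] (A : Finset I) (fα fβ : ℝ) (j : I) : ℝ :=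
  if j ∈ A then fα else fβ

/-- One-period payoff of agent `i` in network `g`:
`u_i(g) = Σ_{j ≠ i reachable from i} δ^(d_g(i,j)-1) f(θ_j) − deg_g(i)·c`. -/
def payoff [Fintype I] (f : I → ℝ) (c δ : ℝ) (g : SimpleGraph I) (i : I) : ℝ :=
  (∑ j ∈ univ.filter fun j => j ≠ i ∧ g.Reachable i j, δ ^ (g.dist i j - 1) * f j)
    - ((univ.filter fun j => g.Adj i j).card : ℝ) * c

/-- Total one-period payoff `ν(g) = Σ_i u_i(g)`. -/
def totalPayoff [Fintype I] (f : I → ℝ) (c δ : ℝ) (g : SimpleGraph I) : ℝ :=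
  ∑ i, payoff f c δ g i

/-- A network is strongly efficient if it maximizes the total payoff. -/
def StronglyEfficient [Fintype I] (f : I → ℝ) (c δ : ℝ) (g : SimpleGraph I) : Prop :=
  ∀ g' : SimpleGraph I, totalPayoff f c δ g' ≤ totalPayoff f c δ g

/-- A network `g` is core-stable if no subgroup `I'` of agents, together with a
network `g'` all of whose links are inside `I'`, gives every member of `I'` a
weakly higher payoff and some member a strictly higher payoff. -/
def CoreStable [Fintype I] (f : I → ℝ) (c δ : ℝ) (g : SimpleGraph I) : Prop :=
  ¬ ∃ (I' : Finset I) (g' : SimpleGraph I),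
      (∀ i j : I, g'.Adj i j → i ∈ I' ∧ j ∈ I') ∧
      (∀ i ∈ I', payoff f c δ g i ≤ payoff f c δ g' i) ∧
      (∃ i ∈ I', payoff f c δ g i < payoff f c δ g' i)

/-- The network whose links are exactly the pairs with at least one endpoint in `A`. -/
def withCore (A : Finset I) : SimpleGraph I where
  Adj i j := i ≠ j ∧ (i ∈ A ∨ j ∈ A)
  symm := ⟨fun i j h => ⟨h.1.symm, h.2.symm⟩⟩
  loopless := ⟨fun i h => h.1 rfl⟩

/-- The clique on `A`: exactly all pairs of distinct members of `A` are linked. -/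
def cliqueOn (A : Finset I) : SimpleGraph I where
  Adj i j := i ≠ j ∧ i ∈ A ∧ j ∈ A
  symm := ⟨fun i j h => ⟨h.1.symm, h.2.2, h.2.1⟩⟩
  loopless := ⟨fun i h => h.1 rfl⟩

/-- Clique on `A` together with the links `{i₀, j}` for every agent `j ∉ A`. -/
def coreStar (A : Finset I) (i₀ : I) : SimpleGraph I where
  Adj i j := i ≠ j ∧ ((i ∈ A ∧ j ∈ A) ∨ (i = i₀ ∧ j ∉ A) ∨ (j = i₀ ∧ i ∉ A))
  symm := by
    constructor
    rintro i j ⟨hne, h⟩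
    refine ⟨hne.symm, ?_⟩
    rcases h with h | h | h
    · exact Or.inl ⟨h.2, h.1⟩
    · exact Or.inr (Or.inr h)
    · exact Or.inr (Or.inl h)
  loopless := ⟨fun i h => h.1 rfl⟩

/-- The star on all agents centered at `i₀`. -/
def starAll (i₀ : I) : SimpleGraph I where
  Adj i j := i ≠ j ∧ (i = i₀ ∨ j = i₀)
  symm := ⟨fun i j h => ⟨h.1.symm, h.2.symm⟩⟩
  loopless := ⟨fun i h => h.1 rfl⟩

/-- The star on the agents in `A`, centered at `i₀`. -/
def starOn (A : Finset I) (i₀ : I) : SimpleGraph I where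
  Adj i j := i ≠ j ∧ (i = i₀ ∨ j = i₀) ∧ i ∈ A ∧ j ∈ A
  symm := ⟨fun i j h => ⟨h.1.symm, h.2.1.symm, h.2.2.2, h.2.2.1⟩⟩
  loopless := ⟨fun i h => h.1 rfl⟩

/-!
Total payoff is a sum over unordered pairs `{i, j}`: a link contributes `f i + f j - 2c`, while an
unlinked reachable pair at distance `d ≥ 2` contributes `δ^(d-1) (f i + f j) ≤ δ (f i + f j)`,
and an unreachable pair contributes `0`. In `withCore A` every unlinked pair of β-agents sits at
distance `2`, so each pair attains the larger of `f i + f j - 2c` and `δ (f i + f j)`. The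
hypotheses say that the link wins exactly when one endpoint is of type α, and with strict
inequality, so any other network loses on some pair.
-/

namespace SimpleGraph

variable {V : Type*} {G : SimpleGraph V} {u v w : V}

lemma dist_eq_two_of_adj_of_adj (huw : G.Adj u w) (hwv : G.Adj w v) (huv : u ≠ v)
    (hnadj : ¬ G.Adj u v) : G.dist u v = 2 := by
  have hedist : G.edist u v = 2 :=
    edist_eq_two_iff.mpr ⟨huv, hnadj, w, (G.mem_commonNeighbors).mpr ⟨huw, hwv.symm⟩⟩
  exact_mod_cast (huw.reachable.trans hwv.reachable).coe_dist_eq_edist.trans hedist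

end SimpleGraph

section PairDecomposition

variable [Fintype I] (f : I → ℝ) (c δ : ℝ)

def payoffFrom (g : SimpleGraph I) (i j : I) : ℝ :=
  if g.Adj i j then f j - c
  else if j ≠ i ∧ g.Reachable i j then δ ^ (g.dist i j - 1) * f j else 0

def pairPayoff (g : SimpleGraph I) (i j : I) : ℝ :=
  payoffFrom f c δ g i j + payoffFrom f c δ g j i

variable {f c δ}

lemma payoff_eq_sum_payoffFrom (g : SimpleGraph I) (i : I) :
    payoff f c δ g i = ∑ j, payoffFrom f c δ g i j := by
  have hcost : ((univ.filter fun j => g.Adj i j).card : ℝ) * c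
      = ∑ j, if g.Adj i j then c else 0 := by
    rw [← sum_filter, sum_const, nsmul_eq_mul]
  rw [payoff, hcost, sum_filter, ← sum_sub_distrib]
  refine sum_congr rfl fun j _ => ?_
  by_cases h : g.Adj i j
  · have hreach : j ≠ i ∧ g.Reachable i j := ⟨h.ne', h.reachable⟩
    simp [payoffFrom, h, hreach, SimpleGraph.dist_eq_one_iff_adj.mpr h]
  · simp [payoffFrom, h]

lemma two_mul_totalPayoff (g : SimpleGraph I) :
    2 * totalPayoff f c δ g = ∑ i, ∑ j, pairPayoff f c δ g i j := by
  simp only [pairPayoff, sum_add_distrib, totalPayoff, payoff_eq_sum_payoffFrom]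
  rw [sum_comm (f := fun i j => payoffFrom f c δ g j i)]
  ring

lemma totalPayoff_le_of_pairPayoff_le {g h : SimpleGraph I}
    (hle : ∀ i j, pairPayoff f c δ g i j ≤ pairPayoff f c δ h i j) :
    totalPayoff f c δ g ≤ totalPayoff f c δ h := by
  have := sum_le_sum fun i (_ : i ∈ univ) => sum_le_sum fun j (_ : j ∈ univ) => hle i j
  rw [← two_mul_totalPayoff, ← two_mul_totalPayoff] at this
  linarith

lemma totalPayoff_lt_of_pairPayoff_lt {g h : SimpleGraph I}
    (hle : ∀ i j, pairPayoff f c δ g i j ≤ pairPayoff f c δ h i j) {i₀ j₀ : I}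
    (hlt : pairPayoff f c δ g i₀ j₀ < pairPayoff f c δ h i₀ j₀) :
    totalPayoff f c δ g < totalPayoff f c δ h := by
  have := sum_lt_sum (fun i (_ : i ∈ univ) => sum_le_sum fun j (_ : j ∈ univ) => hle i j)
    ⟨i₀, mem_univ _, sum_lt_sum (fun j _ => hle i₀ j) ⟨j₀, mem_univ _, hlt⟩⟩
  rw [← two_mul_totalPayoff, ← two_mul_totalPayoff] at this
  linarith

@[simp]
lemma pairPayoff_self (g : SimpleGraph I) (i : I) : pairPayoff f c δ g i i = 0 := by
  simp [pairPayoff, payoffFrom]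

lemma pairPayoff_of_adj {g : SimpleGraph I} {i j : I} (h : g.Adj i j) :
    pairPayoff f c δ g i j = f i + f j - 2 * c := by
  simp only [pairPayoff, payoffFrom, h, h.symm, if_true]
  ring

lemma pairPayoff_of_dist_eq_two {g : SimpleGraph I} {i j : I} (h : g.dist i j = 2) :
    pairPayoff f c δ g i j = δ * (f i + f j) := by
  have hne : g.dist i j ≠ 0 := by omega
  obtain ⟨hij, hreach⟩ := SimpleGraph.dist_ne_zero_iff_ne_and_reachable.mp hne
  have hnadj : ¬ g.Adj i j := fun hadj => by
    rw [SimpleGraph.dist_eq_one_iff_adj.mpr hadj] at h; omega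
  have hnadj' : ¬ g.Adj j i := fun hadj => hnadj hadj.symm
  simp [pairPayoff, payoffFrom, hnadj, hnadj', hij.symm, hij, hreach, hreach.symm,
    SimpleGraph.dist_comm (u := j), h]
  ring

/-- Without a link, a pair is at best at distance `2`. -/
lemma pairPayoff_le_of_not_adj (hδ0 : 0 ≤ δ) (hδ1 : δ ≤ 1) {g : SimpleGraph I} {i j : I}
    (hs : 0 ≤ f i + f j) (h : ¬ g.Adj i j) :
    pairPayoff f c δ g i j ≤ δ * (f i + f j) := by
  by_cases hreach : i ≠ j ∧ g.Reachable i j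
  · obtain ⟨hij, hr⟩ := hreach
    have hd : 1 < g.dist i j := hr.one_lt_dist_of_ne_of_not_adj hij h
    have hpow : δ ^ (g.dist i j - 1) ≤ δ := pow_le_of_le_one hδ0 hδ1 (by omega)
    have h' : ¬ g.Adj j i := fun hadj => h hadj.symm
    simp only [pairPayoff, payoffFrom, h, h', hij, hij.symm, hr, hr.symm,
      SimpleGraph.dist_comm (u := j), ne_eq, not_false_eq_true, and_self, if_true, if_false]
    nlinarith
  · have hzero : pairPayoff f c δ g i j = 0 := by
      rw [not_and_or, not_not] at hreach
      rcases hreach with rfl | hr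
      · exact pairPayoff_self g i
      · have h' : ¬ g.Adj j i := fun hadj => h hadj.symm
        have hr' : ¬ g.Reachable j i := fun hr' => hr hr'.symm
        simp [pairPayoff, payoffFrom, h, h', hr, hr']
    rw [hzero]
    positivity

end PairDecomposition

section WithCore

variable [DecidableEq I] {A : Finset I} {fα fβ c δ : ℝ}

lemma pairPayoff_withCore_of_not_mem [Fintype I] (hA : A.Nonempty) {i j : I} (hij : i ≠ j)
    (hi : i ∉ A) (hj : j ∉ A) :
    pairPayoff (fTheta A fα fβ) c δ (withCore A) i j = δ * (2 * fβ) := by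
  obtain ⟨a, ha⟩ := hA
  have hdist : (withCore A).dist i j = 2 :=
    SimpleGraph.dist_eq_two_of_adj_of_adj (w := a) ⟨by rintro rfl; exact hi ha, Or.inr ha⟩
      ⟨by rintro rfl; exact hj ha, Or.inl ha⟩ hij (by simp [withCore, hi, hj])
  rw [pairPayoff_of_dist_eq_two hdist]
  simp only [fTheta, hi, hj, if_false]
  ring

lemma le_fTheta (hαβ : fβ ≤ fα) (j : I) : fβ ≤ fTheta A fα fβ j := by
  unfold fTheta; split_ifs <;> linarith

lemma fα_add_fβ_le_fTheta_add (hαβ : fβ ≤ fα) {i j : I} (h : i ∈ A ∨ j ∈ A) :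
    fα + fβ ≤ fTheta A fα fβ i + fTheta A fα fβ j := by
  rcases h with h | h
  · have : fTheta A fα fβ i = fα := if_pos h
    linarith [le_fTheta (A := A) hαβ j]
  · have : fTheta A fα fβ j = fα := if_pos h
    linarith [le_fTheta (A := A) hαβ i]

lemma pairPayoff_le_withCore [Fintype I] (hA : A.Nonempty) (hαβ : fβ < fα) (hβ : 0 < fβ)
    (hδ0 : 0 < δ) (hδ1 : δ < 1) (h1 : (1 - δ) * ((fα + fβ) / 2) > c) (h2 : c > (1 - δ) * fβ)
    (g : SimpleGraph I) (i j : I) :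
    let f := fTheta A fα fβ
    pairPayoff f c δ g i j ≤ pairPayoff f c δ (withCore A) i j ∧
      (g.Adj i j ≠ (withCore A).Adj i j →
        pairPayoff f c δ g i j < pairPayoff f c δ (withCore A) i j) := by
  intro f
  rcases eq_or_ne i j with rfl | hij
  · simp
  have hs : 2 * fβ ≤ f i + f j := by
    linarith [le_fTheta (A := A) hαβ.le i, le_fTheta (A := A) hαβ.le j]
  have hnot_adj : ¬ g.Adj i j → pairPayoff f c δ g i j ≤ δ * (f i + f j) :=
    pairPayoff_le_of_not_adj hδ0.le hδ1.le (by linarith)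
  by_cases hcore : i ∈ A ∨ j ∈ A
  · have hadj : (withCore A).Adj i j := ⟨hij, hcore⟩
    have hlink : δ * (f i + f j) < f i + f j - 2 * c := by
      nlinarith [fα_add_fβ_le_fTheta_add hαβ.le hcore]
    rw [pairPayoff_of_adj hadj]
    by_cases hg : g.Adj i j
    · simp [pairPayoff_of_adj hg, hg, hadj]
    · exact ⟨(hnot_adj hg).trans hlink.le, fun _ => (hnot_adj hg).trans_lt hlink⟩
  · rw [not_or] at hcore
    have hnadj : ¬ (withCore A).Adj i j := by simp [withCore, hcore]
    have hf : f i + f j = 2 * fβ := by simp [f, fTheta, hcore]; ring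
    rw [pairPayoff_withCore_of_not_mem hA hij hcore.1 hcore.2]
    rw [hf] at hnot_adj
    by_cases hg : g.Adj i j
    · have hlink : 2 * fβ - 2 * c < δ * (2 * fβ) := by nlinarith
      rw [pairPayoff_of_adj hg, hf]
      exact ⟨hlink.le, fun _ => hlink⟩
    · exact ⟨hnot_adj hg, fun hne => absurd (iff_of_false hg hnadj).eq hne⟩

end WithCore

theorem thm2b_general {I : Type*} [Fintype I] [DecidableEq I]
    (A : Finset I) (fα fβ c δ : ℝ)
    (hA : 1 ≤ A.card)
    (hfαβ : fβ < fα) (hfβ : 0 < fβ)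
    (hδ0 : 0 < δ) (hδ1 : δ < 1)
    (h1 : (1 - δ) * ((fα + fβ) / 2) > c) (h2 : c > (1 - δ) * fβ) :
    StronglyEfficient (fTheta A fα fβ) c δ (withCore A) ∧
      ∀ g : SimpleGraph I, StronglyEfficient (fTheta A fα fβ) c δ g → g = withCore A := by
  have hpair := pairPayoff_le_withCore (card_pos.mp hA) hfαβ hfβ hδ0 hδ1 h1 h2
  have hle g := totalPayoff_le_of_pairPayoff_le fun i j => (hpair g i j).1
  refine ⟨hle, fun g hg => ?_⟩
  by_contra hne
  obtain ⟨i, j, hij⟩ : ∃ i j, g.Adj i j ≠ (withCore A).Adj i j := by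
    by_contra! hall
    exact hne (SimpleGraph.ext (funext₂ hall))
  have hlt := totalPayoff_lt_of_pairPayoff_lt (fun i j => (hpair g i j).1) ((hpair g i j).2 hij)
  exact (hg (withCore A)).not_gt hlt

/-- Theorem 2(b): if `(1−δ)·(fα+fβ)/2 > c > (1−δ)·fβ`, the unique strongly
efficient network links exactly the pairs with at least one type-α endpoint. -/
theorem thm2b {I : Type*} [Fintype I] [DecidableEq I]
    (A : Finset I) (fα fβ c δ : ℝ)
    (hA : 1 ≤ A.card) (hB : 1 ≤ Aᶜ.card)
    (hfαβ : fβ < fα) (hfβ : 0 < fβ) (hc : 0 < c)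
    (hδ0 : 0 < δ) (hδ1 : δ < 1)
    (h1 : (1 - δ) * ((fα + fβ) / 2) > c) (h2 : c > (1 - δ) * fβ) :
    StronglyEfficient (fTheta A fα fβ) c δ (withCore A) ∧
      ∀ g : SimpleGraph I, StronglyEfficient (fTheta A fα fβ) c δ g → g = withCore A :=
  thm2b_general A fα fβ c δ hA hfαβ hfβ hδ0 hδ1 h1 h2
end
end

section
/- Theorem 2(g): If (1−δ)·f_α < c and both 2(n_α−1)·f_α + n_β·(f_α+f_β) + δ[(n_α−1)(n_α−2)·f_α + n_β(n_β−1)·f_β + n_β(n_α−1)·(f_α+f_β)] − 2(n_α+n_β−1)·c < 0 and f_α·(2+δ(n_α−2)) − 2c < 0, then the empty network (the graph with no edges) is the unique strongly efficient network. -/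
open Finset

noncomputable section

open scoped Classical

variable {I : Type*}

/-!
The total payoff splits over connected components, and an isolated agent contributes nothing.
In a component with `k ≥ 2` agents, an agent gets the full benefit only from its neighbours and
at most `δ` times the benefit from everyone else, while the component has at least `k - 1` links.
Since `(1 - δ) fα < c`, every link beyond those of a spanning tree costs more than it can add, so
the component is worth at most a star centred at a type-α agent. The star gains value when
type-β members are replaced by type-α ones, and with all type-α agents used up its value is a
convex function of the number of type-β members. The clique condition makes stars of type-α
agents alone negative and the second condition makes the star on all agents negative, so every
component with a link, and hence every nonempty network, has negative total payoff.
-/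

open SimpleGraph

/-- Total payoff of a star centred at a type-α agent, with `x` type-α and `y` type-β members. -/
def starValue (fα fβ c δ x y : ℝ) : ℝ :=
  (x * fα + y * fβ) * (1 + δ * (x + y - 2)) + (1 - δ) * (x + y - 2) * fα
    - 2 * (x + y - 1) * c

section StarValue

variable {fα fβ c δ : ℝ}

lemma starValue_zero_right (x : ℝ) :
    starValue fα fβ c δ x 0 = (x - 1) * (fα * (2 + δ * (x - 2)) - 2 * c) := by
  unfold starValue; ring

lemma starValue_le_starValue_shift (hfαβ : fβ ≤ fα) (hδ0 : 0 ≤ δ) (hδ1 : δ ≤ 1) {x y s : ℝ}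
    (hxy : 1 ≤ x + y) (hs : 0 ≤ s) :
    starValue fα fβ c δ x y ≤ starValue fα fβ c δ (x + s) (y - s) := by
  have hgain : starValue fα fβ c δ (x + s) (y - s) - starValue fα fβ c δ x y
      = s * (fα - fβ) * (1 + δ * (x + y - 2)) := by
    unfold starValue; ring
  have : 0 ≤ 1 + δ * (x + y - 2) := by nlinarith [mul_nonneg hδ0 (sub_nonneg.2 hxy)]
  nlinarith [mul_nonneg (mul_nonneg hs (sub_nonneg.2 hfαβ)) this]

lemma starValue_neg_of_endpoints (hfβ : 0 ≤ fβ) (hδ0 : 0 ≤ δ) {x n t : ℝ}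
    (h0 : starValue fα fβ c δ x 0 ≤ 0) (hn : starValue fα fβ c δ x n < 0)
    (ht0 : 0 < t) (htn : t ≤ n) :
    starValue fα fβ c δ x t < 0 := by
  -- `starValue` is a convex quadratic in `y`, with leading coefficient `δ * fβ`
  have hconvex : n * starValue fα fβ c δ x t = (n - t) * starValue fα fβ c δ x 0
      + t * starValue fα fβ c δ x n - δ * fβ * n * t * (n - t) := by
    unfold starValue; ring
  have hbend : 0 ≤ δ * fβ * n * t * (n - t) :=
    mul_nonneg (mul_nonneg (mul_nonneg (mul_nonneg hδ0 hfβ) (by linarith)) ht0.le)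
      (sub_nonneg.2 htn)
  have : n * starValue fα fβ c δ x t < 0 := by
    rw [hconvex]; nlinarith [mul_nonpos_of_nonneg_of_nonpos (sub_nonneg.2 htn) h0]
  exact neg_of_mul_neg_right this (by linarith)

lemma starValue_neg (hfαβ : fβ ≤ fα) (hfβ : 0 ≤ fβ) (hδ0 : 0 ≤ δ) (hδ1 : δ ≤ 1)
    {nα nβ a b : ℝ} (hnα : 1 ≤ nα)
    (hall : starValue fα fβ c δ nα nβ < 0) (hclique : fα * (2 + δ * (nα - 2)) - 2 * c < 0)
    (hb0 : 0 ≤ b) (ha : a ≤ nα) (hb : b ≤ nβ) (hab : 2 ≤ a + b) :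
    starValue fα fβ c δ a b < 0 := by
  have hfα : 0 ≤ fα := hfβ.trans hfαβ
  have hα : ∀ x, 1 ≤ x → x ≤ nα → fα * (2 + δ * (x - 2)) - 2 * c < 0 := fun x _ hx => by
    nlinarith [mul_nonneg hfα hδ0]
  rcases le_or_gt (a + b) nα with hsmall | hlarge
  · calc starValue fα fβ c δ a b ≤ starValue fα fβ c δ (a + b) (b - b) :=
          starValue_le_starValue_shift hfαβ hδ0 hδ1 (by linarith) (by linarith)
      _ < 0 := by
        rw [sub_self, starValue_zero_right]
        exact mul_neg_of_pos_of_neg (by linarith) (hα _ (by linarith) hsmall)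
  · have h0 : starValue fα fβ c δ nα 0 ≤ 0 := by
      rw [starValue_zero_right]
      exact mul_nonpos_of_nonneg_of_nonpos (by linarith) (hα _ hnα le_rfl).le
    calc starValue fα fβ c δ a b ≤ starValue fα fβ c δ (a + (nα - a)) (b - (nα - a)) :=
          starValue_le_starValue_shift hfαβ hδ0 hδ1 (by linarith) (by linarith)
      _ < 0 := by
        rw [add_sub_cancel]
        exact starValue_neg_of_endpoints hfβ hδ0 h0 hall (by linarith) (by linarith)

end StarValue

namespace SimpleGraph

variable {g : SimpleGraph I} {f : I → ℝ} {c δ : ℝ}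

lemma pow_dist_sub_one_mul_le {i j : I} (hij : i ≠ j) (hreach : g.Reachable i j) {x : ℝ}
    (hx : 0 ≤ x) (hδ0 : 0 ≤ δ) (hδ1 : δ ≤ 1) :
    δ ^ (g.dist i j - 1) * x ≤ δ * x + (1 - δ) * (if g.Adj i j then x else 0) := by
  split_ifs with hadj
  · rw [dist_eq_one_iff_adj.2 hadj, Nat.sub_self, pow_zero]; linarith
  · have hfar : g.dist i j - 1 ≠ 0 := by
      have := hreach.one_lt_dist_of_ne_of_not_adj hij hadj; omega
    linarith [mul_le_mul_of_nonneg_right (pow_le_of_le_one hδ0 hδ1 hfar) hx]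

variable [Fintype I]

lemma card_filter_adj_eq_degree (i : I) : #(univ.filter fun j => g.Adj i j) = g.degree i := by
  rw [← card_neighborFinset_eq_degree, neighborFinset_eq_filter]

lemma payoff_eq_zero_of_forall_not_adj {i : I} (h : ∀ j, ¬ g.Adj i j) :
    payoff f c δ g i = 0 := by
  have hreach : ∀ j, ¬ (j ≠ i ∧ g.Reachable i j) := fun j ⟨hji, hij⟩ => by
    obtain ⟨k, hk⟩ := hij.nonempty_neighborSet_left hji.symm
    exact h k hk
  simp [payoff, hreach, h]

lemma totalPayoff_bot : totalPayoff f c δ (⊥ : SimpleGraph I) = 0 :=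
  sum_eq_zero fun _ _ => payoff_eq_zero_of_forall_not_adj fun _ h => h

variable [DecidableEq I]

namespace ConnectedComponent

variable (C : g.ConnectedComponent)

lemma two_mul_card_sub_one_le_sum_degree :
    2 * (#C.supp.toFinset - 1) ≤ ∑ i ∈ C.supp.toFinset, g.degree i := by
  have hconn : (g.induce C.supp).Connected := C.connected_toSimpleGraph
  have hedges : #C.supp.toFinset ≤ #(g.induce C.supp).edgeFinset + 1 := by
    convert hconn.card_vert_le_card_edgeSet_add_one using 1
    · rw [Nat.card_eq_fintype_card, Set.toFinset_card]
    · rw [Nat.card_eq_card_toFinset]; rfl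
  have hdeg : ∀ v : C.supp, (g.induce C.supp).degree v = g.degree v := fun v =>
    degree_induce_of_neighborSet_subset fun _ hw => C.mem_supp_of_adj_mem_supp v.2 hw
  calc 2 * (#C.supp.toFinset - 1) ≤ 2 * #(g.induce C.supp).edgeFinset := by omega
    _ = ∑ v : C.supp, (g.induce C.supp).degree v :=
      (g.induce C.supp).sum_degrees_eq_twice_card_edges.symm
    _ = ∑ i ∈ C.supp.toFinset, g.degree i := by
      rw [Finset.sum_congr rfl fun v _ => hdeg v]
      exact (Finset.sum_subtype C.supp.toFinset (fun _ => Set.mem_toFinset)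
        (fun i => g.degree i)).symm

variable {C}

lemma sum_ite_adj_eq_degree_mul {j : I} (hj : j ∈ C.supp) (x : ℝ) :
    ∑ i ∈ C.supp.toFinset, (if g.Adj i j then x else 0) = g.degree j * x := by
  have hnbr : C.supp.toFinset.filter (fun i => g.Adj i j) = g.neighborFinset j := by
    ext i
    simp only [mem_filter, Set.mem_toFinset, mem_neighborFinset]
    exact ⟨fun h => h.2.symm, fun h => ⟨C.mem_supp_of_adj_mem_supp hj h, h.symm⟩⟩
  rw [← Finset.sum_filter, hnbr, sum_const, card_neighborFinset_eq_degree, nsmul_eq_mul]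

lemma sum_sum_ite_adj_eq_sum_degree_mul :
    ∑ i ∈ C.supp.toFinset, ∑ j ∈ C.supp.toFinset, (if g.Adj i j then f j else 0)
      = ∑ j ∈ C.supp.toFinset, g.degree j * f j := by
  rw [Finset.sum_comm]
  exact sum_congr rfl fun j hj => sum_ite_adj_eq_degree_mul (Set.mem_toFinset.1 hj) (f j)

lemma filter_reachable_eq_erase {i : I} (hi : i ∈ C.supp) :
    univ.filter (fun j => j ≠ i ∧ g.Reachable i j) = C.supp.toFinset.erase i := by
  ext j
  rw [mem_supp_iff] at hi
  simp [mem_supp_iff, ← hi, ConnectedComponent.eq, reachable_comm]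

lemma payoff_le_of_mem_supp {i : I} (hi : i ∈ C.supp) (hf : ∀ j, 0 ≤ f j)
    (hδ0 : 0 ≤ δ) (hδ1 : δ ≤ 1) :
    payoff f c δ g i ≤ δ * ∑ j ∈ C.supp.toFinset.erase i, f j
      + (1 - δ) * ∑ j ∈ C.supp.toFinset, (if g.Adj i j then f j else 0) - g.degree i * c := by
  have hloop : ∑ j ∈ C.supp.toFinset, (if g.Adj i j then f j else 0)
      = ∑ j ∈ C.supp.toFinset.erase i, (if g.Adj i j then f j else 0) :=
    (sum_erase (f := fun j => if g.Adj i j then f j else 0) _ (if_neg g.irrefl)).symm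
  rw [payoff, filter_congr_decidable, filter_reachable_eq_erase hi, card_filter_adj_eq_degree,
    hloop, mul_sum, mul_sum, ← sum_add_distrib]
  gcongr with j hj
  obtain ⟨hji, hj⟩ := mem_erase.1 hj
  exact pow_dist_sub_one_mul_le (Ne.symm hji)
    (C.reachable_of_mem_supp hi (Set.mem_toFinset.1 hj)) (hf j) hδ0 hδ1

lemma sum_payoff_le {M : ℝ} (hf0 : ∀ j, 0 ≤ f j) (hfM : ∀ j, f j ≤ M)
    (hδ0 : 0 ≤ δ) (hδ1 : δ ≤ 1) (hcM : (1 - δ) * M ≤ c) (hC : 2 ≤ #C.supp.toFinset) :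
    ∑ i ∈ C.supp.toFinset, payoff f c δ g i
      ≤ (1 - δ) * (∑ j ∈ C.supp.toFinset, f j + (#C.supp.toFinset - 2) * M)
        + δ * (#C.supp.toFinset - 1) * ∑ j ∈ C.supp.toFinset, f j
        - 2 * (#C.supp.toFinset - 1) * c := by
  set K := C.supp.toFinset with hK
  set S := ∑ j ∈ K, f j
  set D := ∑ j ∈ K, g.degree j with hD
  have hdeg_pos : ∀ j ∈ K, 1 ≤ g.degree j := fun j hj => by
    obtain ⟨j', hj', hne⟩ := exists_mem_ne (by omega : 1 < #K) j
    rw [hK, Set.mem_toFinset] at hj hj'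
    exact (C.reachable_of_mem_supp hj hj').degree_pos_left hne.symm
  have hweighted : ∑ j ∈ K, (g.degree j : ℝ) * f j ≤ S + ((D : ℝ) - #K) * M := by
    have hpoint : ∀ j ∈ K, (g.degree j : ℝ) * f j ≤ f j + ((g.degree j : ℝ) - 1) * M :=
      fun j hj => by
        have : (1 : ℝ) ≤ g.degree j := by exact_mod_cast hdeg_pos j hj
        nlinarith [hfM j]
    calc ∑ j ∈ K, (g.degree j : ℝ) * f j ≤ ∑ j ∈ K, (f j + ((g.degree j : ℝ) - 1) * M) :=
          sum_le_sum hpoint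
      _ = S + ((D : ℝ) - #K) * M := by
          rw [sum_add_distrib, ← sum_mul, sum_sub_distrib, hD]; push_cast; simp [S]
  have hedges : 2 * ((#K : ℝ) - 1) ≤ D := by
    have := C.two_mul_card_sub_one_le_sum_degree
    rw [← hK, ← hD] at this
    have hcast : ((2 * (#K - 1) : ℕ) : ℝ) = 2 * ((#K : ℝ) - 1) := by
      rw [Nat.cast_mul, Nat.cast_sub (by omega)]; norm_num
    exact hcast ▸ Nat.cast_le.2 this
  calc ∑ i ∈ K, payoff f c δ g i
      ≤ ∑ i ∈ K, (δ * ∑ j ∈ K.erase i, f j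
          + (1 - δ) * ∑ j ∈ K, (if g.Adj i j then f j else 0) - g.degree i * c) :=
        sum_le_sum fun i hi => payoff_le_of_mem_supp (Set.mem_toFinset.1 hi) hf0 hδ0 hδ1
    _ = δ * (#K - 1) * S + (1 - δ) * ∑ j ∈ K, (g.degree j : ℝ) * f j - D * c := by
        rw [sum_sub_distrib, sum_add_distrib, ← mul_sum, ← mul_sum,
          sum_sum_ite_adj_eq_sum_degree_mul, ← sum_mul, ← hK,
          sum_congr rfl fun i hi => sum_erase_eq_sub hi, sum_sub_distrib, sum_const,
          nsmul_eq_mul, hD]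
        push_cast; ring
    _ ≤ (1 - δ) * (S + (#K - 2) * M) + δ * (#K - 1) * S - 2 * (#K - 1) * c := by
        nlinarith [mul_le_mul_of_nonneg_left hweighted (sub_nonneg.2 hδ1)]

lemma sum_payoff_eq_zero_of_card_le_one (hC : #C.supp.toFinset ≤ 1) :
    ∑ i ∈ C.supp.toFinset, payoff f c δ g i = 0 := by
  refine sum_eq_zero fun i hi => payoff_eq_zero_of_forall_not_adj fun j hij => ?_
  have hj : j ∈ C.supp.toFinset :=
    Set.mem_toFinset.2 (C.mem_supp_of_adj_mem_supp (Set.mem_toFinset.1 hi) hij)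
  exact absurd (one_lt_card.2 ⟨i, hi, j, hj, hij.ne⟩) (by omega)

lemma sum_payoff_nonpos
    (hneg : 2 ≤ #C.supp.toFinset → ∑ i ∈ C.supp.toFinset, payoff f c δ g i < 0) :
    ∑ i ∈ C.supp.toFinset, payoff f c δ g i ≤ 0 := by
  rcases le_or_gt 2 #C.supp.toFinset with hC | hC
  · exact (hneg hC).le
  · exact (sum_payoff_eq_zero_of_card_le_one (by omega)).le

end ConnectedComponent

lemma totalPayoff_eq_sum_connectedComponent :
    totalPayoff f c δ g = ∑ C : g.ConnectedComponent, ∑ i ∈ C.supp.toFinset, payoff f c δ g i := by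
  rw [totalPayoff, ← sum_fiberwise univ g.connectedComponentMk]
  refine sum_congr rfl fun C _ => sum_congr ?_ fun _ _ => rfl
  ext i
  simp [ConnectedComponent.mem_supp_iff]

lemma totalPayoff_nonpos (hneg : ∀ C : g.ConnectedComponent,
      2 ≤ #C.supp.toFinset → ∑ i ∈ C.supp.toFinset, payoff f c δ g i < 0) :
    totalPayoff f c δ g ≤ 0 := by
  rw [totalPayoff_eq_sum_connectedComponent]
  exact sum_nonpos fun C _ => C.sum_payoff_nonpos (hneg C)

lemma totalPayoff_neg (hneg : ∀ C : g.ConnectedComponent,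
      2 ≤ #C.supp.toFinset → ∑ i ∈ C.supp.toFinset, payoff f c δ g i < 0)
    (hg : g ≠ ⊥) : totalPayoff f c δ g < 0 := by
  obtain ⟨x, y, hxy⟩ : ∃ x y, g.Adj x y := by
    by_contra! h
    exact hg (eq_bot_iff_forall_not_adj.2 h)
  set C := g.connectedComponentMk x
  have hx : x ∈ C.supp := rfl
  have hy : y ∈ C.supp := C.mem_supp_of_adj_mem_supp hx hxy
  have hC : 2 ≤ #C.supp.toFinset :=
    one_lt_card.2 ⟨x, Set.mem_toFinset.2 hx, y, Set.mem_toFinset.2 hy, hxy.ne⟩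
  rw [totalPayoff_eq_sum_connectedComponent, ← sum_const_zero]
  exact sum_lt_sum (fun C _ => C.sum_payoff_nonpos (hneg C)) ⟨C, mem_univ _, hneg C hC⟩

end SimpleGraph

section TwoTypes

variable [DecidableEq I] {A : Finset I} {fα fβ c δ : ℝ}

lemma sum_fTheta (K : Finset I) :
    ∑ j ∈ K, fTheta A fα fβ j = #(K.filter (· ∈ A)) * fα + #(K.filter (· ∉ A)) * fβ := by
  simp only [fTheta]
  rw [sum_ite, sum_const, sum_const, nsmul_eq_mul, nsmul_eq_mul]

variable [Fintype I]

lemma SimpleGraph.ConnectedComponent.sum_payoff_fTheta_neg {g : SimpleGraph I}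
    (C : g.ConnectedComponent) (hA : 1 ≤ #A) (hfαβ : fβ ≤ fα) (hfβ : 0 ≤ fβ)
    (hδ0 : 0 ≤ δ) (hδ1 : δ ≤ 1) (hlink : (1 - δ) * fα ≤ c)
    (hall : starValue fα fβ c δ #A #Aᶜ < 0)
    (hclique : fα * (2 + δ * ((#A : ℝ) - 2)) - 2 * c < 0) (hC : 2 ≤ #C.supp.toFinset) :
    ∑ i ∈ C.supp.toFinset, payoff (fTheta A fα fβ) c δ g i < 0 := by
  set K := C.supp.toFinset
  have hk : #K = #(K.filter (· ∈ A)) + #(K.filter (· ∉ A)) :=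
    (card_filter_add_card_filter_not _).symm
  have ha : #(K.filter (· ∈ A)) ≤ #A := card_le_card fun _ hj => (mem_filter.1 hj).2
  have hb : #(K.filter (· ∉ A)) ≤ #Aᶜ :=
    card_le_card fun _ hj => mem_compl.2 (mem_filter.1 hj).2
  have hf0 : ∀ j, 0 ≤ fTheta A fα fβ j := fun j => by
    unfold fTheta; split_ifs <;> linarith
  have hfα : ∀ j, fTheta A fα fβ j ≤ fα := fun j => by
    unfold fTheta; split_ifs <;> linarith
  calc ∑ i ∈ K, payoff (fTheta A fα fβ) c δ g i
      ≤ (1 - δ) * (∑ j ∈ K, fTheta A fα fβ j + ((#K : ℝ) - 2) * fα)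
        + δ * ((#K : ℝ) - 1) * ∑ j ∈ K, fTheta A fα fβ j - 2 * ((#K : ℝ) - 1) * c :=
        C.sum_payoff_le hf0 hfα hδ0 hδ1 hlink hC
    _ = starValue fα fβ c δ #(K.filter (· ∈ A)) #(K.filter (· ∉ A)) := by
        rw [sum_fTheta, hk]; push_cast; unfold starValue; ring
    _ < 0 := starValue_neg hfαβ hfβ hδ0 hδ1 (by exact_mod_cast hA) hall hclique
        (Nat.cast_nonneg _) (by exact_mod_cast ha) (by exact_mod_cast hb)
        (by rw [hk] at hC; exact_mod_cast hC)

end TwoTypes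

theorem thm2g_general {I : Type*} [Fintype I] [DecidableEq I]
    (A : Finset I) (fα fβ c δ : ℝ)
    (hA : 1 ≤ A.card)
    (hfαβ : fβ < fα) (hfβ : 0 < fβ)
    (hδ0 : 0 < δ) (hδ1 : δ < 1)
    (h1 : (1 - δ) * fα < c)
    (h2 : 2 * ((A.card : ℝ) - 1) * fα + (Aᶜ.card : ℝ) * (fα + fβ) + δ * (((A.card : ℝ) - 1) * ((A.card : ℝ) - 2) * fα + (Aᶜ.card : ℝ) * ((Aᶜ.card : ℝ) - 1) * fβ + (Aᶜ.card : ℝ) * ((A.card : ℝ) - 1) * (fα + fβ)) - 2 * ((A.card : ℝ) + (Aᶜ.card : ℝ) - 1) * c < 0)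
    (h3 : fα * (2 + δ * ((A.card : ℝ) - 2)) - 2 * c < 0) :
    StronglyEfficient (fTheta A fα fβ) c δ (⊥ : SimpleGraph I) ∧
      ∀ g : SimpleGraph I, StronglyEfficient (fTheta A fα fβ) c δ g → g = ⊥ := by
  have hall : starValue fα fβ c δ #A #Aᶜ < 0 := by unfold starValue; linarith
  have hneg (g : SimpleGraph I) (C : g.ConnectedComponent) (hC : 2 ≤ #C.supp.toFinset) :
      ∑ i ∈ C.supp.toFinset, payoff (fTheta A fα fβ) c δ g i < 0 :=
    C.sum_payoff_fTheta_neg hA hfαβ.le hfβ.le hδ0.le hδ1.le h1.le hall h3 hC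
  have hbot : totalPayoff (fTheta A fα fβ) c δ (⊥ : SimpleGraph I) = 0 := totalPayoff_bot
  refine ⟨fun g => hbot ▸ totalPayoff_nonpos (hneg g), fun g hg => ?_⟩
  by_contra hne
  linarith [hg ⊥, totalPayoff_neg (hneg g) hne]

/-- Theorem 2(g): the empty network is the unique strongly efficient network. -/
theorem thm2g {I : Type*} [Fintype I] [DecidableEq I]
    (A : Finset I) (fα fβ c δ : ℝ)
    (hA : 1 ≤ A.card) (hB : 1 ≤ Aᶜ.card)
    (hfαβ : fβ < fα) (hfβ : 0 < fβ) (hc : 0 < c)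
    (hδ0 : 0 < δ) (hδ1 : δ < 1)
    (h1 : (1 - δ) * fα < c)
    (h2 : 2 * ((A.card : ℝ) - 1) * fα + (Aᶜ.card : ℝ) * (fα + fβ) + δ * (((A.card : ℝ) - 1) * ((A.card : ℝ) - 2) * fα + (Aᶜ.card : ℝ) * ((Aᶜ.card : ℝ) - 1) * fβ + (Aᶜ.card : ℝ) * ((A.card : ℝ) - 1) * (fα + fβ)) - 2 * ((A.card : ℝ) + (Aᶜ.card : ℝ) - 1) * c < 0)
    (h3 : fα * (2 + δ * ((A.card : ℝ) - 2)) - 2 * c < 0) :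
    StronglyEfficient (fTheta A fα fβ) c δ (⊥ : SimpleGraph I) ∧
      ∀ g : SimpleGraph I, StronglyEfficient (fTheta A fα fβ) c δ g → g = ⊥ :=
  thm2g_general A fα fβ c δ hA hfαβ hfβ hδ0 hδ1 h1 h2 h3
end
end

section
/- Proposition 4(e): If c > max{ f_α + δ·((n_α−1)·f_α + (n_β−1)·f_β), f_α + δ·((n_α−2)·f_α + n_β·f_β), (1−δ)·f_α }, then for every agent i (of either type) the maximum over all networks g on I of u_i(g) equals 0, attained by any network in which i is a singleton. -/
/-!
Bound agent `i`'s payoff through its neighbours: a neighbour is worth its full value, every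
other agent at most `δ` times its value, so with `S = Σ_{k ≠ i} f k` the payoff is at most
`δ S + Σ_{j ~ i} ((1 - δ) f j - c)`. When `i` has a neighbour, charge `δ S` to one of
them; the cost bound on `c` makes that term nonpositive, and each further link is unprofitable
because `(1 - δ) f_α < c`.
-/

open Finset

noncomputable section

open scoped Classical

variable {I : Type*}

section Payoff

variable {f : I → ℝ} {c δ : ℝ} {g : SimpleGraph I} {i : I}

lemma discounted_value_le (hδ0 : 0 ≤ δ) (hδ1 : δ ≤ 1) (hf : ∀ j, 0 ≤ f j) {j : I}
    (hji : j ≠ i) (hreach : g.Reachable i j) :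
    δ ^ (g.dist i j - 1) * f j ≤ δ * f j + if g.Adj i j then (1 - δ) * f j else 0 := by
  by_cases hadj : g.Adj i j
  · simp only [SimpleGraph.dist_eq_one_iff_adj.mpr hadj, hadj, if_true, Nat.sub_self, pow_zero]
    linarith
  · have hdist : 2 ≤ g.dist i j := by
      have := hreach.pos_dist_of_ne hji.symm
      have := mt SimpleGraph.dist_eq_one_iff_adj.mp hadj
      omega
    simpa [hadj] using mul_le_mul_of_nonneg_right
      (pow_le_pow_of_le_one hδ0 hδ1 (by omega : 1 ≤ g.dist i j - 1)) (hf j)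

variable [Fintype I]

lemma payoff_eq_zero_of_forall_not_adj (hi : ∀ j, ¬ g.Adj i j) : payoff f c δ g i = 0 := by
  have hreach : ∀ j, j ≠ i → ¬ g.Reachable i j := by
    rintro j hj ⟨w⟩
    cases w with
    | nil => exact hj rfl
    | cons hadj _ => exact hi _ hadj
  rw [payoff, filter_false_of_mem fun j _ h => hreach j h.1 h.2]
  simp [hi]

lemma payoff_le_sum_neighbors (hδ0 : 0 ≤ δ) (hδ1 : δ ≤ 1) (hf : ∀ j, 0 ≤ f j) :
    payoff f c δ g i ≤
      δ * (∑ k, f k - f i) + ∑ j ∈ univ.filter (g.Adj i), ((1 - δ) * f j - c) := by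
  set G : I → ℝ := fun j => δ * f j + if g.Adj i j then (1 - δ) * f j else 0
  have hG : ∀ j, 0 ≤ G j := fun j =>
    add_nonneg (mul_nonneg hδ0 (hf j)) (ite_nonneg (mul_nonneg (sub_nonneg.2 hδ1) (hf j)) le_rfl)
  have hreached : ∑ j ∈ univ.filter (fun j => j ≠ i ∧ g.Reachable i j),
      δ ^ (g.dist i j - 1) * f j ≤ ∑ j ∈ univ.erase i, G j := calc
    _ ≤ ∑ j ∈ univ.filter (fun j => j ≠ i ∧ g.Reachable i j), G j :=
        sum_le_sum fun j hj => by
          obtain ⟨hji, hr⟩ := (mem_filter.mp hj).2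
          exact discounted_value_le hδ0 hδ1 hf hji hr
    _ ≤ ∑ j ∈ univ.erase i, G j :=
        sum_le_sum_of_subset_of_nonneg (fun j hj => by simp_all) fun j _ _ => hG j
  have hG_sum : ∑ j ∈ univ.erase i, G j =
      δ * (∑ k, f k - f i) + ∑ j ∈ univ.filter (g.Adj i), (1 - δ) * f j := by
    rw [sum_add_distrib, ← mul_sum, sum_erase_eq_sub (mem_univ i),
      sum_erase _ (by simp), sum_filter]
  rw [payoff, sum_sub_distrib, sum_const, nsmul_eq_mul]
  linarith

lemma payoff_nonpos (hδ0 : 0 ≤ δ) (hδ1 : δ ≤ 1) (hf : ∀ j, 0 ≤ f j)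
    (hlink : ∀ j, (1 - δ) * f j ≤ c)
    (hfirst : ∀ j ≠ i, (1 - δ) * f j + δ * (∑ k, f k - f i) ≤ c) :
    payoff f c δ g i ≤ 0 := by
  by_cases hi : ∃ j, g.Adj i j
  · obtain ⟨j, hj⟩ := hi
    have hjN : j ∈ univ.filter (g.Adj i) := by simpa using hj
    have hrest : ∑ k ∈ (univ.filter (g.Adj i)).erase j, ((1 - δ) * f k - c) ≤ 0 :=
      sum_nonpos fun k _ => by linarith [hlink k]
    have := hfirst j hj.ne'
    calc payoff f c δ g i
        ≤ δ * (∑ k, f k - f i) + ∑ k ∈ univ.filter (g.Adj i), ((1 - δ) * f k - c) :=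
          payoff_le_sum_neighbors hδ0 hδ1 hf
      _ = δ * (∑ k, f k - f i) + ((1 - δ) * f j - c) +
            ∑ k ∈ (univ.filter (g.Adj i)).erase j, ((1 - δ) * f k - c) := by
          rw [← add_sum_erase _ _ hjN, add_assoc]
      _ ≤ 0 := by linarith
  · push Not at hi
    exact (payoff_eq_zero_of_forall_not_adj hi).le

end Payoff

section TwoTypes

variable [DecidableEq I] {A : Finset I} {fα fβ : ℝ}

lemma fTheta_nonneg (hfαβ : fβ ≤ fα) (hfβ : 0 ≤ fβ) (j : I) : 0 ≤ fTheta A fα fβ j := by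
  unfold fTheta
  split_ifs <;> linarith

lemma fTheta_le (hfαβ : fβ ≤ fα) (j : I) : fTheta A fα fβ j ≤ fα := by
  unfold fTheta
  split_ifs <;> linarith

lemma sum_fTheta_s13 [Fintype I] : ∑ k, fTheta A fα fβ k = A.card * fα + Aᶜ.card * fβ := by
  have hα : ∀ k ∈ A, fTheta A fα fβ k = fα := fun k hk => if_pos hk
  have hβ : ∀ k ∈ Aᶜ, fTheta A fα fβ k = fβ := fun k hk => if_neg (mem_compl.mp hk)
  rw [← sum_add_sum_compl A, sum_congr rfl hα, sum_congr rfl hβ]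
  simp

lemma one_sub_mul_fTheta_add_le [Fintype I] {c δ : ℝ} (hfαβ : fβ ≤ fα) (hδ1 : δ ≤ 1)
    (hβ : fα + δ * (((A.card : ℝ) - 1) * fα + ((Aᶜ.card : ℝ) - 1) * fβ) ≤ c)
    (hα : fα + δ * (((A.card : ℝ) - 2) * fα + (Aᶜ.card : ℝ) * fβ) ≤ c) (i j : I) :
    (1 - δ) * fTheta A fα fβ j + δ * (∑ k, fTheta A fα fβ k - fTheta A fα fβ i) ≤ c := by
  have hj : (1 - δ) * fTheta A fα fβ j ≤ (1 - δ) * fα :=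
    mul_le_mul_of_nonneg_left (fTheta_le hfαβ j) (by linarith)
  rw [sum_fTheta_s13]
  by_cases hi : i ∈ A <;> simp only [fTheta, hi, if_true, if_false] at hj ⊢ <;> linarith

end TwoTypes

theorem prop4e_general {I : Type*} [Fintype I] [DecidableEq I]
    (A : Finset I) (fα fβ c δ : ℝ)
    (hfαβ : fβ < fα) (hfβ : 0 < fβ)
    (hδ0 : 0 < δ) (hδ1 : δ < 1)
    (h : c > max (max (fα + δ * (((A.card : ℝ) - 1) * fα + ((Aᶜ.card : ℝ) - 1) * fβ))
        (fα + δ * (((A.card : ℝ) - 2) * fα + (Aᶜ.card : ℝ) * fβ))) ((1 - δ) * fα)) :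
    ∀ i : I,
      IsGreatest (Set.range fun g : SimpleGraph I => payoff (fTheta A fα fβ) c δ g i) 0 ∧
      ∀ g : SimpleGraph I, (∀ j : I, ¬ g.Adj i j) → payoff (fTheta A fα fβ) c δ g i = 0 := by
  intro i
  obtain ⟨⟨hβ, hα⟩, hlink⟩ : (_ < c ∧ _ < c) ∧ _ < c := by simpa using h
  refine ⟨⟨⟨⊥, payoff_eq_zero_of_forall_not_adj fun _ => id⟩, ?_⟩,
    fun _ => payoff_eq_zero_of_forall_not_adj⟩
  rintro _ ⟨g, rfl⟩
  exact payoff_nonpos hδ0.le hδ1.le (fTheta_nonneg hfαβ.le hfβ.le)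
    (fun j => (mul_le_mul_of_nonneg_left (fTheta_le hfαβ.le j) (by linarith)).trans hlink.le)
    (fun j _ => one_sub_mul_fTheta_add_le hfαβ.le hδ1.le hβ.le hα.le i j)

/-- Proposition 4(e): if the cost is large, every agent's attained maximum
one-period payoff over all networks is `0`, attained by any network in which
that agent is a singleton. -/
theorem prop4e {I : Type*} [Fintype I] [DecidableEq I]
    (A : Finset I) (fα fβ c δ : ℝ)
    (hA : 1 ≤ A.card) (hB : 1 ≤ Aᶜ.card)
    (hfαβ : fβ < fα) (hfβ : 0 < fβ) (hc : 0 < c)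
    (hδ0 : 0 < δ) (hδ1 : δ < 1)
    (h : c > max (max (fα + δ * (((A.card : ℝ) - 1) * fα + ((Aᶜ.card : ℝ) - 1) * fβ))
        (fα + δ * (((A.card : ℝ) - 2) * fα + (Aᶜ.card : ℝ) * fβ))) ((1 - δ) * fα)) :
    ∀ i : I,
      IsGreatest (Set.range fun g : SimpleGraph I => payoff (fTheta A fα fβ) c δ g i) 0 ∧
      ∀ g : SimpleGraph I, (∀ j : I, ¬ g.Adj i j) → payoff (fTheta A fα fβ) c δ g i = 0 :=
  prop4e_general A fα fβ c δ hfαβ hfβ hδ0 hδ1 h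
end
end
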